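/- Let d ≥ 2 be an integer and let α ∈ (0, 2/(d+1)). Set β = (2 + α(d−1))/(4d) and C₀ = (2^{(d−1)/2} κ_{d−1} / (d κ_d²))^{1/(2d)}, and for λ > 0 set u_λ = C₀ λ^β. Then for every fixed h ≥ 0, lim_{λ → ∞} φ_{λ,α,u_λ}(h) = h^{(d−1)/2}. -/

import Mathlib

open MeasureTheory Real Filter

/-- `kappa j` is the Lebesgue volume of the unit ball in `ℝ^j`. -/
noncomputable def kappa (j : ℕ) : ℝ :=
  (volume (Metric.ball (0 : EuclideanSpace ℝ (Fin j)) 1)).toReal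

/-- Normalized surface area `s₁` of a spherical cap of height `h` (equals `1` for `h > 2`). -/
noncomputable def s1 (d : ℕ) (h : ℝ) : ℝ :=
  if h ≤ 2 then
    (((d : ℝ) - 1) * kappa (d - 1) / ((d : ℝ) * kappa d)) *
      ∫ θ in (0:ℝ)..(Real.arccos (1 - h)), (Real.sin θ) ^ (d - 2)
  else 1

/-- The function `g_{λ,α,u}(h)`. -/
noncomputable def gfun (lam al u h : ℝ) : ℝ :=
  min (max ((lam ^ al / u ^ 2 * h - (1 / 2) * (1 + lam ^ al) / u ^ 4 * h ^ 2) /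
      (1 - h / u ^ 2)) 0) 2

/-- The density `φ_{λ,α,u}(h)`. -/
noncomputable def phi (d : ℕ) (lam al u h : ℝ) : ℝ :=
  lam * (1 + lam ^ al) ^ d / u ^ (d + 1) / (kappa d * lam ^ ((d : ℝ) * al)) *
    s1 d (gfun lam al u h) * (1 - h / u ^ 2) ^ (d - 1)

/-!
Near `t = 0` a cap of height `t` has angular radius `arccos (1 - t) ~ √(2t)`, and
`∫₀^x sin^{d-2} ~ x^{d-1}/(d-1)` by L'Hôpital, so `s₁(t) ~ s1Coeff d · t^{(d-1)/2}`.
When `λ^α / u² → 0`, the cap height `g_{λ,α,u}(h)` is asymptotic to `λ^α h / u²` and tends to `0`,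
which gives `φ_{λ,α,u}(h) ~ (s1Coeff d / κ_d) · h^{(d-1)/2} · λ^{1 + α(d-1)/2} / u^{2d}`.
The scaling `u_λ = C₀ λ^β` makes the last factor the constant `C₀^{-2d} = κ_d / s1Coeff d`,
and `α < 2/(d+1)` is exactly the condition `α < 2β`.
-/

open Set Topology Asymptotics

theorem kappa_pos (j : ℕ) : 0 < kappa j :=
  ENNReal.toReal_pos (Metric.measure_ball_pos _ _ one_pos).ne' measure_ball_lt_top.ne

theorem Asymptotics.IsEquivalent.rpow_of_eventually_nonneg {α : Type*} {l : Filter α}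
    {u v : α → ℝ} (hv : ∀ᶠ x in l, 0 ≤ v x) (h : u ~[l] v) (r : ℝ) :
    u ^ r ~[l] v ^ r := by
  have hmax : v =ᶠ[l] fun x => max (v x) 0 := hv.mono fun x hx => (max_eq_left hx).symm
  refine ((h.congr_right hmax).rpow (fun x => le_max_right (v x) 0)).congr_right ?_
  filter_upwards [hmax] with x hx
  simp only [Pi.pow_apply, ← hx]

theorem integral_sin_pow_isEquivalent (n : ℕ) :
    (fun x : ℝ => ∫ θ in (0 : ℝ)..x, sin θ ^ n) ~[𝓝[>] 0] fun x => x ^ (n + 1) / (n + 1) := by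
  have hcont : Continuous fun θ : ℝ => sin θ ^ n := by fun_prop
  have hn : (n + 1 : ℝ) ≠ 0 := by positivity
  refine isEquivalent_of_tendsto_one <| HasDerivAt.lhopital_zero_nhdsGT
    (f' := fun x => sin x ^ n) (g' := fun x => x ^ n)
    (.of_forall fun x => (hcont.integral_hasStrictDerivAt 0 x).hasDerivAt)
    (.of_forall fun x => by simpa [hn] using (hasDerivAt_pow (n + 1) x).div_const (n + 1 : ℝ))
    ?_ ?_ ?_ ?_
  · filter_upwards [self_mem_nhdsWithin] with x (hx : 0 < x)
    positivity
  · simpa using (hcont.integral_hasStrictDerivAt 0 0).hasDerivAt.continuousAt.tendsto.mono_left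
      nhdsWithin_le_nhds
  · have : Continuous fun x : ℝ => x ^ (n + 1) / (n + 1) := by fun_prop
    simpa using this.continuousAt.tendsto.mono_left (nhdsWithin_le_nhds (a := (0 : ℝ)))
  · have : Tendsto (fun x => sinc x ^ n) (𝓝[>] 0) (𝓝 1) := by
      have hsinc : Continuous fun x => sinc x ^ n := by fun_prop
      simpa only [sinc_zero, one_pow] using (hsinc.tendsto 0).mono_left nhdsWithin_le_nhds
    refine this.congr' ?_
    filter_upwards [self_mem_nhdsWithin] with x (hx : 0 < x)
    rw [sinc_of_ne_zero hx.ne', div_pow]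

theorem mul_sinc_half (x : ℝ) : x * sinc (x / 2) = 2 * sin (x / 2) := by
  rcases eq_or_ne x 0 with rfl | hx
  · simp
  · rw [sinc_of_ne_zero (by positivity)]
    field_simp

theorem sqrt_two_mul_eq_arccos_one_sub_mul_sinc {t : ℝ} (ht₀ : 0 ≤ t) (ht₂ : t ≤ 2) :
    √(2 * t) = arccos (1 - t) * sinc (arccos (1 - t) / 2) := by
  set x := arccos (1 - t)
  have hcos : cos x = 1 - t := cos_arccos (by linarith) (by linarith)
  have hsin : 0 ≤ sin (x / 2) :=
    sin_nonneg_of_nonneg_of_le_pi (div_nonneg (arccos_nonneg _) zero_le_two)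
      (by linarith [arccos_le_pi (1 - t), pi_pos])
  have hsq : 2 * t = (2 * sin (x / 2)) ^ 2 := by
    rw [mul_pow, sin_sq_eq_half_sub, mul_div_cancel₀ x two_ne_zero, hcos]
    ring
  rw [mul_sinc_half, hsq, sqrt_sq (by positivity)]

theorem arccos_one_sub_isEquivalent :
    (fun t : ℝ => arccos (1 - t)) ~[𝓝[>] 0] fun t => √(2 * t) := by
  have hsinc : Tendsto (fun t : ℝ => sinc (arccos (1 - t) / 2)) (𝓝[>] 0) (𝓝 1) := by
    have : Continuous fun t : ℝ => sinc (arccos (1 - t) / 2) := by fun_prop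
    simpa using this.continuousAt.tendsto.mono_left (nhdsWithin_le_nhds (a := (0 : ℝ)))
  have h : (fun t => arccos (1 - t) * sinc (arccos (1 - t) / 2)) ~[𝓝[>] 0]
      fun t => arccos (1 - t) := by
    have := (IsEquivalent.refl (u := fun t : ℝ => arccos (1 - t))).mul
      ((isEquivalent_const_iff_tendsto one_ne_zero).2 hsinc)
    rwa [Function.const_one, mul_one] at this
  refine (h.congr_left ?_).symm
  filter_upwards [Ioo_mem_nhdsGT two_pos] with t ht
  exact (sqrt_two_mul_eq_arccos_one_sub_mul_sinc ht.1.le ht.2.le).symm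

theorem tendsto_arccos_one_sub_nhdsGT :
    Tendsto (fun t : ℝ => arccos (1 - t)) (𝓝[>] 0) (𝓝[>] 0) := by
  refine tendsto_nhdsWithin_iff.2 ⟨?_, ?_⟩
  · have : Continuous fun t : ℝ => arccos (1 - t) := by fun_prop
    simpa using this.continuousAt.tendsto.mono_left (nhdsWithin_le_nhds (a := (0 : ℝ)))
  · filter_upwards [self_mem_nhdsWithin] with t (ht : 0 < t)
    exact arccos_pos.2 (by linarith)

theorem sq_rpow_half_sub_one {d : ℕ} (hd : 1 ≤ d) {x : ℝ} (hx : 0 ≤ x) :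
    (x ^ 2) ^ (((d : ℝ) - 1) / 2) = x ^ (d - 1) := by
  rw [← rpow_natCast x 2, ← rpow_mul hx, ← rpow_natCast]
  congr 1
  push_cast [Nat.cast_sub hd]
  ring

noncomputable def s1Coeff (d : ℕ) : ℝ := 2 ^ (((d : ℝ) - 1) / 2) * kappa (d - 1) / (d * kappa d)

theorem s1Coeff_pos {d : ℕ} (hd : d ≠ 0) : 0 < s1Coeff d := by
  have := kappa_pos d
  have := kappa_pos (d - 1)
  rw [s1Coeff]
  positivity

theorem s1_isEquivalent {d : ℕ} (hd : 2 ≤ d) :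
    s1 d ~[𝓝[>] 0] fun t => s1Coeff d * t ^ (((d : ℝ) - 1) / 2) := by
  have hd' : (d : ℝ) - 1 ≠ 0 := by
    have : (2 : ℝ) ≤ d := by exact_mod_cast hd
    linarith
  have hint : (fun t => ∫ θ in (0 : ℝ)..arccos (1 - t), sin θ ^ (d - 2)) ~[𝓝[>] 0]
      fun t => arccos (1 - t) ^ (d - 1) / ((d : ℝ) - 1) := by
    have := (integral_sin_pow_isEquivalent (d - 2)).comp_tendsto tendsto_arccos_one_sub_nhdsGT
    rwa [show d - 2 + 1 = d - 1 by omega, show ((d - 2 : ℕ) : ℝ) + 1 = d - 1 by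
      push_cast [Nat.cast_sub hd]; ring] at this
  have hpow : (fun t => arccos (1 - t) ^ (d - 1) / ((d : ℝ) - 1)) ~[𝓝[>] 0]
      fun t => √(2 * t) ^ (d - 1) / ((d : ℝ) - 1) :=
    (arccos_one_sub_isEquivalent.pow (d - 1)).div IsEquivalent.refl
  refine (IsEquivalent.refl (u := fun _ => ((d : ℝ) - 1) * kappa (d - 1) / (d * kappa d))).mul
    (hint.trans hpow) |>.congr_left ?_ |>.congr_right ?_
  · filter_upwards [Ioo_mem_nhdsGT two_pos] with t ht
    simp only [Pi.mul_apply, s1, if_pos ht.2.le]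
  · filter_upwards [self_mem_nhdsWithin] with t (ht : 0 < t)
    rw [Pi.mul_apply, ← sq_rpow_half_sub_one (by omega) (sqrt_nonneg _),
      sq_sqrt (by positivity), mul_rpow zero_le_two ht.le, s1Coeff]
    field_simp

theorem gfun_eq_min_max {lam al u h : ℝ} (hA : lam ^ al ≠ 0) (hu : u ≠ 0) :
    gfun lam al u h = min (max (lam ^ al * h / u ^ 2 *
      ((1 - (1 + lam ^ al) / lam ^ al * (h / u ^ 2) / 2) / (1 - h / u ^ 2))) 0) 2 := by
  rw [gfun, ← mul_div_assoc]
  congr 3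
  field_simp

section LargeLambda

variable {al h : ℝ} {u : ℝ → ℝ}

theorem tendsto_rpow_mul_div_sq (hw : Tendsto (fun lam => lam ^ al / u lam ^ 2) atTop (𝓝 0)) :
    Tendsto (fun lam => lam ^ al * h / u lam ^ 2) atTop (𝓝 0) := by
  simpa only [zero_mul, mul_div_right_comm] using hw.mul_const h

theorem tendsto_div_sq_of_tendsto_rpow_div_sq (hal : 0 < al) (hu : ∀ᶠ lam in atTop, 0 < u lam)
    (hw : Tendsto (fun lam => lam ^ al / u lam ^ 2) atTop (𝓝 0)) :
    Tendsto (fun lam => h / u lam ^ 2) atTop (𝓝 0) := by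
  have hA : Tendsto (fun lam : ℝ => lam ^ al) atTop atTop := tendsto_rpow_atTop hal
  have := (hw.mul hA.inv_tendsto_atTop).const_mul h
  rw [mul_zero, mul_zero] at this
  refine this.congr' ?_
  filter_upwards [hA.eventually_gt_atTop 0, hu] with lam hA hu
  simp only [Pi.inv_apply]
  field_simp

theorem gfun_isEquivalent (hal : 0 < al) (hh : 0 ≤ h) (hu : ∀ᶠ lam in atTop, 0 < u lam)
    (hw : Tendsto (fun lam => lam ^ al / u lam ^ 2) atTop (𝓝 0)) :
    (fun lam => gfun lam al (u lam) h) ~[atTop] fun lam => lam ^ al * h / u lam ^ 2 := by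
  have hA : Tendsto (fun lam : ℝ => lam ^ al) atTop atTop := tendsto_rpow_atTop hal
  have hApos : ∀ᶠ lam : ℝ in atTop, 0 < lam ^ al := hA.eventually_gt_atTop 0
  have hq := tendsto_div_sq_of_tendsto_rpow_div_sq (h := h) hal hu hw
  have hE : Tendsto (fun lam : ℝ => (1 + lam ^ al) / lam ^ al) atTop (𝓝 1) := by
    have := hA.inv_tendsto_atTop.const_add 1
    rw [add_zero] at this
    refine this.congr' ?_
    filter_upwards [hApos] with lam hA
    simp only [Pi.inv_apply]
    field_simp
    ring
  set M := fun lam : ℝ =>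
    (1 - (1 + lam ^ al) / lam ^ al * (h / u lam ^ 2) / 2) / (1 - h / u lam ^ 2)
  have hM : Tendsto M atTop (𝓝 1) := by
    have := (tendsto_const_nhds (x := (1 : ℝ)).sub ((hE.mul hq).div_const 2)).div
      (tendsto_const_nhds (x := (1 : ℝ)).sub hq) (by norm_num)
    rwa [mul_zero, zero_div, sub_zero, div_one] at this
  have hwM : Tendsto (fun lam => lam ^ al * h / u lam ^ 2 * M lam) atTop (𝓝 0) := by
    simpa using (tendsto_rpow_mul_div_sq hw).mul hM
  have hgfun : (fun lam => lam ^ al * h / u lam ^ 2 * M lam) =ᶠ[atTop]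
      fun lam => gfun lam al (u lam) h := by
    filter_upwards [hApos, hu, hM.eventually (lt_mem_nhds one_pos),
      hwM.eventually (gt_mem_nhds two_pos)] with lam hA hu hM hwM
    rw [gfun_eq_min_max hA.ne' hu.ne', max_eq_left (mul_nonneg (by positivity) hM.le),
      min_eq_left hwM.le]
  have := (IsEquivalent.refl (u := fun lam => lam ^ al * h / u lam ^ 2)).mul
    ((isEquivalent_const_iff_tendsto one_ne_zero).2 hM)
  rw [Function.const_one, mul_one] at this
  exact this.congr_left hgfun

theorem phi_isEquivalent {d : ℕ} (hd : 2 ≤ d) (hal : 0 < al) (hh : 0 < h)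
    (hu : ∀ᶠ lam in atTop, 0 < u lam)
    (hw : Tendsto (fun lam => lam ^ al / u lam ^ 2) atTop (𝓝 0)) :
    (fun lam => phi d lam al (u lam) h) ~[atTop] fun lam =>
      s1Coeff d / kappa d * h ^ (((d : ℝ) - 1) / 2) *
        (lam * (lam ^ al) ^ (((d : ℝ) - 1) / 2) / u lam ^ (2 * d)) := by
  set p := ((d : ℝ) - 1) / 2
  have hA : Tendsto (fun lam : ℝ => lam ^ al) atTop atTop := tendsto_rpow_atTop hal
  have hg := gfun_isEquivalent hal hh.le hu hw
  have hwpos : ∀ᶠ lam in atTop, 0 < lam ^ al * h / u lam ^ 2 := by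
    filter_upwards [hA.eventually_gt_atTop 0, hu] with lam hA hu
    positivity
  have hg₀ : Tendsto (fun lam => gfun lam al (u lam) h) atTop (𝓝[>] 0) :=
    tendsto_nhdsWithin_iff.2
      ⟨hg.symm.tendsto_nhds (tendsto_rpow_mul_div_sq hw), hg.eventually_pos hwpos⟩
  have hs1 : (fun lam => s1 d (gfun lam al (u lam) h)) ~[atTop]
      fun lam => s1Coeff d * (lam ^ al * h / u lam ^ 2) ^ p :=
    ((s1_isEquivalent hd).comp_tendsto hg₀).trans
      (IsEquivalent.refl.mul (hg.rpow_of_eventually_nonneg (hwpos.mono fun _ => le_of_lt) p))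
  have hpow : (fun lam : ℝ => (1 + lam ^ al) ^ d) ~[atTop] fun lam => (lam ^ al) ^ d :=
    (IsEquivalent.refl.const_add_of_norm_tendsto_atTop (c := (1 : ℝ))
      (tendsto_norm_atTop_atTop.comp hA)).pow d
  have hQ : (fun lam : ℝ => (1 - h / u lam ^ 2) ^ (d - 1)) ~[atTop] fun _ => (1 : ℝ) := by
    refine (isEquivalent_const_iff_tendsto one_ne_zero).2 ?_
    simpa using ((tendsto_div_sq_of_tendsto_rpow_div_sq hal hu hw).const_sub 1).pow (d - 1)
  refine (IsEquivalent.refl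
      (u := fun lam => lam / u lam ^ (d + 1) / (kappa d * lam ^ ((d : ℝ) * al)))).mul
    ((hpow.mul hs1).mul hQ) |>.congr_left ?_ |>.congr_right ?_
  · refine .of_forall fun lam => ?_
    simp only [phi, Pi.mul_apply]
    ring
  · filter_upwards [eventually_gt_atTop 0, hu] with lam hlam hu
    have hu2p : (u lam ^ 2) ^ p = u lam ^ (d - 1) := sq_rpow_half_sub_one (by omega) hu.le
    have hu2d : u lam ^ (2 * d) = u lam ^ (d + 1) * u lam ^ (d - 1) := by
      rw [← pow_add]
      congr 1
      omega
    have := kappa_pos d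
    simp only [Pi.mul_apply]
    rw [mul_comm (d : ℝ), rpow_mul_natCast hlam.le, div_rpow (by positivity) (by positivity),
      mul_rpow (by positivity) hh.le, hu2p, hu2d]
    field_simp

end LargeLambda

theorem phi_zero (d : ℕ) (lam al u : ℝ) : phi d lam al u 0 = 0 := by
  simp [phi, gfun, s1]

theorem tendsto_rpow_div_sq_const_mul_rpow {a b C : ℝ} (hab : a < 2 * b) :
    Tendsto (fun lam => lam ^ a / (C * lam ^ b) ^ 2) atTop (𝓝 0) := by
  have := (tendsto_rpow_neg_atTop (by linarith : 0 < 2 * b - a)).div_const (C ^ 2)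
  rw [zero_div] at this
  refine this.congr' ?_
  filter_upwards [eventually_gt_atTop 0] with lam hlam
  rw [neg_sub, rpow_sub hlam, mul_pow, ← rpow_natCast (lam ^ b), ← rpow_mul hlam.le]
  ring_nf

theorem const_rpow_mul_rpow_pow_two_mul {d : ℕ} (hd : d ≠ 0) {C lam : ℝ} (hC : 0 ≤ C)
    (hlam : 0 < lam) (al : ℝ) :
    (C ^ ((1 : ℝ) / (2 * d)) * lam ^ ((2 + al * ((d : ℝ) - 1)) / (4 * d))) ^ (2 * d) =
      C * (lam * (lam ^ al) ^ (((d : ℝ) - 1) / 2)) := by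
  have hd' : (d : ℝ) ≠ 0 := by exact_mod_cast hd
  have hexp : (2 + al * ((d : ℝ) - 1)) / (4 * d) * (2 * d) = 1 + al * (((d : ℝ) - 1) / 2) := by
    field_simp
    ring
  rw [← rpow_natCast, mul_rpow (by positivity) (by positivity), ← rpow_mul hC, ← rpow_mul hlam.le]
  push_cast
  rw [hexp, rpow_add hlam, rpow_one, rpow_mul hlam.le, one_div_mul_cancel (by positivity), rpow_one]

/-- for `α ∈ (0, 2/(d+1))`, `β = (2+α(d-1))/(4d)`,
`C₀ = (2^{(d-1)/2} κ_{d-1}/(d κ_d²))^{1/(2d)}` and `u_λ = C₀ λ^β`,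
`φ_{λ,α,u_λ}(h) → h^{(d-1)/2}` for every fixed `h ≥ 0`. -/
theorem phi_limit_pos_subcritical (d : ℕ) (hd : 2 ≤ d) (al : ℝ)
    (hal0 : 0 < al) (hal1 : al < 2 / ((d : ℝ) + 1)) (h : ℝ) (hh : 0 ≤ h) :
    Tendsto (fun lam : ℝ =>
        phi d lam al
          (((2 : ℝ) ^ (((d : ℝ) - 1) / 2) * kappa (d - 1) / ((d : ℝ) * kappa d ^ 2)) ^
              ((1 : ℝ) / (2 * (d : ℝ))) *
            lam ^ ((2 + al * ((d : ℝ) - 1)) / (4 * (d : ℝ)))) h)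
      atTop (nhds (h ^ (((d : ℝ) - 1) / 2))) := by
  have hd₀ : (2 : ℝ) ≤ d := by exact_mod_cast hd
  have hκ := kappa_pos d
  have hs := s1Coeff_pos (d := d) (by omega)
  rw [show (2 : ℝ) ^ (((d : ℝ) - 1) / 2) * kappa (d - 1) / (d * kappa d ^ 2) =
    s1Coeff d / kappa d by rw [s1Coeff]; field_simp]
  rcases hh.eq_or_lt with rfl | hh
  · simp [phi_zero, zero_rpow (by linarith : ((d : ℝ) - 1) / 2 ≠ 0)]
  have hβ : al < 2 * ((2 + al * ((d : ℝ) - 1)) / (4 * d)) := by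
    rw [lt_div_iff₀ (by linarith)] at hal1
    field_simp
    linarith
  refine (phi_isEquivalent hd hal0 hh ?_ (tendsto_rpow_div_sq_const_mul_rpow hβ)).symm
    |>.tendsto_nhds (tendsto_const_nhds.congr' ?_)
  all_goals filter_upwards [eventually_gt_atTop 0] with lam hlam
  · positivity
  · rw [const_rpow_mul_rpow_pow_two_mul (by omega) (by positivity) hlam]
    field_simp
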